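/- Let T be a bounded totally paranormal operator and μ an isolated point of σ(T). Let E_μ be the Riesz projection of T at μ. Then the range of E_μ equals ker(T − μI). -/

import Mathlib

/-!
Write `S = T - μ`. For `0 < ρ ≤ r`, Cauchy's theorem shrinks the contour to radius `ρ`, and
`S ^ n E_μ = (2πi)⁻¹ ∮_{|z - μ| = ρ} (z - μ) ^ n (z - T)⁻¹ dz` has norm `O(ρ ^ n)`.
Paranormality of `S` makes `n ↦ ‖S ^ n x‖` log-convex, so `‖x‖ (‖S x‖ / ‖x‖) ^ n ≤ ‖S ^ n x‖`;
for `x` in the range of `E_μ` this forces `‖S x‖ ≤ ρ ‖x‖` for all small `ρ`, hence `S x = 0`.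
Conversely, on `ker S` the resolvent acts as `(z - μ)⁻¹`, whose contour integral is `2πi`,
so `E_μ` fixes `ker S`.
-/

open Metric Filter Topology Real Complex

def IsParanormal {𝕜 E : Type*} [NontriviallyNormedField 𝕜] [SeminormedAddCommGroup E]
    [NormedSpace 𝕜 E] (A : E →L[𝕜] E) : Prop :=
  ∀ x, ‖A x‖ ^ 2 ≤ ‖A (A x)‖ * ‖x‖

section LogConvex

variable {a : ℕ → ℝ}

-- `a 1 / a 0 ≤ a (n + 1) / a n`, cleared of denominators.
lemma mul_le_mul_succ_of_sq_le_mul (hnn : ∀ n, 0 ≤ a n)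
    (hconv : ∀ n, a (n + 1) ^ 2 ≤ a (n + 2) * a n) (n : ℕ) :
    a 1 * a n ≤ a 0 * a (n + 1) := by
  induction n with
  | zero => rw [mul_comm]
  | succ n ih =>
    rcases (hnn n).eq_or_lt with hn | hn
    · have hsq := hconv n
      rw [← hn, mul_zero] at hsq
      have : a (n + 1) = 0 := pow_eq_zero_iff two_ne_zero |>.mp (le_antisymm hsq (sq_nonneg _))
      rw [this, mul_zero]
      exact mul_nonneg (hnn 0) (hnn _)
    · refine le_of_mul_le_mul_left ?_ hn
      calc a n * (a 1 * a (n + 1)) = a 1 * a n * a (n + 1) := by ring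
        _ ≤ a 0 * a (n + 1) * a (n + 1) := mul_le_mul_of_nonneg_right ih (hnn _)
        _ = a 0 * a (n + 1) ^ 2 := by ring
        _ ≤ a 0 * (a (n + 2) * a n) := mul_le_mul_of_nonneg_left (hconv n) (hnn 0)
        _ = a n * (a 0 * a (n + 2)) := by ring

lemma pow_mul_le_pow_mul_of_sq_le_mul (hnn : ∀ n, 0 ≤ a n)
    (hconv : ∀ n, a (n + 1) ^ 2 ≤ a (n + 2) * a n) (n : ℕ) :
    a 0 * a 1 ^ n ≤ a 0 ^ n * a n := by
  induction n with
  | zero => simp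
  | succ n ih =>
    calc a 0 * a 1 ^ (n + 1) = a 1 * (a 0 * a 1 ^ n) := by ring
      _ ≤ a 1 * (a 0 ^ n * a n) := mul_le_mul_of_nonneg_left ih (hnn 1)
      _ = a 0 ^ n * (a 1 * a n) := by ring
      _ ≤ a 0 ^ n * (a 0 * a (n + 1)) :=
        mul_le_mul_of_nonneg_left (mul_le_mul_succ_of_sq_le_mul hnn hconv n) (pow_nonneg (hnn 0) n)
      _ = a 0 ^ (n + 1) * a (n + 1) := by ring

lemma le_of_forall_mul_pow_le_mul_pow {c q ρ D : ℝ} (hc : 0 < c) (hρ : 0 < ρ)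
    (h : ∀ n : ℕ, c * q ^ n ≤ D * ρ ^ n) : q ≤ ρ := by
  by_contra! hlt
  obtain ⟨n, hn⟩ := pow_unbounded_of_one_lt (D / c) ((one_lt_div hρ).mpr hlt)
  have := h n
  rw [div_pow, lt_div_iff₀ (pow_pos hρ n), div_mul_eq_mul_div, div_lt_iff₀ hc] at hn
  linarith

lemma eq_zero_of_sq_le_mul_of_eventually_le_mul_pow (hnn : ∀ n, 0 ≤ a n)
    (hconv : ∀ n, a (n + 1) ^ 2 ≤ a (n + 2) * a n)
    (hdecay : ∀ᶠ ρ in 𝓝[>] 0, ∃ D, ∀ n, a n ≤ D * ρ ^ n) : a 1 = 0 := by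
  rcases (hnn 0).eq_or_lt with h0 | h0
  · nlinarith [hconv 0, hnn 1, hnn 2]
  refine le_antisymm ?_ (hnn 1)
  have hsmall : ∀ᶠ ρ in 𝓝[>] 0, a 1 ≤ a 0 * ρ := by
    filter_upwards [hdecay, self_mem_nhdsWithin] with ρ ⟨D, hD⟩ (hρ : 0 < ρ)
    refine le_of_forall_mul_pow_le_mul_pow (D := D) h0 (mul_pos h0 hρ) (fun n => ?_)
    calc a 0 * a 1 ^ n ≤ a 0 ^ n * a n := pow_mul_le_pow_mul_of_sq_le_mul hnn hconv n
      _ ≤ a 0 ^ n * (D * ρ ^ n) := mul_le_mul_of_nonneg_left (hD n) (pow_nonneg h0.le n)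
      _ = D * (a 0 * ρ) ^ n := by ring
  have hlim : Tendsto (fun ρ => a 0 * ρ) (𝓝[>] 0) (𝓝 0) := by
    simpa using ((continuous_const_mul (a 0)).tendsto 0).mono_left nhdsWithin_le_nhds
  exact ge_of_tendsto hlim hsmall

end LogConvex

namespace IsParanormal

variable {𝕜 E : Type*} [NontriviallyNormedField 𝕜] [NormedAddCommGroup E] [NormedSpace 𝕜 E]
  {A : E →L[𝕜] E}

lemma sq_norm_pow_succ_apply_le (hA : IsParanormal A) (x : E) (n : ℕ) :
    ‖(A ^ (n + 1)) x‖ ^ 2 ≤ ‖(A ^ (n + 2)) x‖ * ‖(A ^ n) x‖ := by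
  simpa only [pow_succ', mul_apply_eq_comp] using hA ((A ^ n) x)

lemma apply_eq_zero_of_eventually_norm_pow_apply_le (hA : IsParanormal A) {x : E}
    (hdecay : ∀ᶠ ρ in 𝓝[>] 0, ∃ D, ∀ n, ‖(A ^ n) x‖ ≤ D * ρ ^ n) : A x = 0 := by
  have := eq_zero_of_sq_le_mul_of_eventually_le_mul_pow (a := fun n => ‖(A ^ n) x‖)
    (fun n => norm_nonneg _) (hA.sq_norm_pow_succ_apply_le x) hdecay
  simpa only [pow_one, norm_eq_zero] using this

end IsParanormal

theorem ContinuousLinearMap.circleIntegral_comp_comm {E F : Type*} [NormedAddCommGroup E]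
    [NormedSpace ℂ E] [CompleteSpace E] [NormedAddCommGroup F] [NormedSpace ℂ F] [CompleteSpace F]
    (L : E →L[ℂ] F) {f : ℂ → E} {c : ℂ} {R : ℝ} (hf : CircleIntegrable f c R) :
    ∮ z in C(c, R), L (f z) = L (∮ z in C(c, R), f z) := by
  simp only [circleIntegral, ← map_smul]
  exact L.intervalIntegral_comp_comm hf.out

section BanachAlgebra

variable {A : Type*} [NormedRing A] [NormedAlgebra ℂ A] {a : A} {μ : ℂ} {r ρ : ℝ}

-- `rieszMoment a μ r 0` is the Riesz projection `E_μ`.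
noncomputable def rieszMoment (a : A) (μ : ℂ) (r : ℝ) (n : ℕ) : A :=
  (2 * π * I : ℂ)⁻¹ • ∮ z in C(μ, r), (z - μ) ^ n • resolvent a z

lemma mem_resolventSet_of_mem_closedBall (hsep : closedBall μ r ∩ spectrum ℂ a ⊆ {μ}) {z : ℂ}
    (hz : z ∈ closedBall μ r) (hzμ : z ≠ μ) : z ∈ resolventSet ℂ a :=
  spectrum.notMem_iff.mp fun hspec => hzμ (hsep ⟨hz, hspec⟩)

lemma sphere_subset_resolventSet (hsep : closedBall μ r ∩ spectrum ℂ a ⊆ {μ}) (hρ : 0 < ρ)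
    (hρr : ρ ≤ r) : sphere μ ρ ⊆ resolventSet ℂ a := fun _ hz =>
  mem_resolventSet_of_mem_closedBall hsep (sphere_subset_closedBall.trans
    (closedBall_subset_closedBall hρr) hz) (ne_of_mem_sphere hz hρ.ne')

lemma sub_smul_one_mul_resolvent {z : ℂ} (hz : z ∈ resolventSet ℂ a) :
    (a - μ • 1) * resolvent a z = (z - μ) • resolvent a z - 1 := by
  have hsplit : a - μ • (1 : A) = (z - μ) • 1 - (algebraMap ℂ A z - a) := by
    rw [Algebra.algebraMap_eq_smul_one, sub_smul]
    abel
  rw [hsplit, sub_mul, smul_mul_assoc, one_mul, resolvent, Ring.mul_inverse_cancel _ hz]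

lemma norm_rieszMoment_le {C : ℝ} (n : ℕ) (hρ : 0 ≤ ρ)
    (hC : ∀ z ∈ sphere μ ρ, ‖resolvent a z‖ ≤ C) :
    ‖rieszMoment a μ ρ n‖ ≤ ρ * (ρ ^ n * C) := by
  refine circleIntegral.norm_two_pi_i_inv_smul_integral_le_of_norm_le_const hρ fun z hz => ?_
  rw [norm_smul, norm_pow, mem_sphere_iff_norm.mp hz]
  exact mul_le_mul_of_nonneg_left (hC z hz) (pow_nonneg hρ n)

variable [CompleteSpace A]

lemma continuousOn_resolvent {s : Set ℂ} (hs : s ⊆ resolventSet ℂ a) :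
    ContinuousOn (resolvent a) s := fun _ hz =>
  (spectrum.hasDerivAt_resolvent_const_left (hs hz)).continuousAt.continuousWithinAt

lemma circleIntegrable_sub_pow_smul_resolvent (n : ℕ) (hρ : 0 ≤ ρ)
    (hs : sphere μ ρ ⊆ resolventSet ℂ a) :
    CircleIntegrable (fun z => (z - μ) ^ n • resolvent a z) μ ρ :=
  ContinuousOn.circleIntegrable hρ
    (((continuousOn_id.sub continuousOn_const).pow n).smul (continuousOn_resolvent hs))

lemma sub_smul_one_mul_rieszMoment (n : ℕ) (hρ : 0 ≤ ρ) (hs : sphere μ ρ ⊆ resolventSet ℂ a) :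
    (a - μ • 1) * rieszMoment a μ ρ n = rieszMoment a μ ρ (n + 1) := by
  have hcomm : (a - μ • 1) * (∮ z in C(μ, ρ), (z - μ) ^ n • resolvent a z) =
      ∮ z in C(μ, ρ), (a - μ • 1) * ((z - μ) ^ n • resolvent a z) :=
    ((ContinuousLinearMap.mul ℂ A _).circleIntegral_comp_comm
      (circleIntegrable_sub_pow_smul_resolvent n hρ hs)).symm
  have hmul : Set.EqOn (fun z => (a - μ • 1) * ((z - μ) ^ n • resolvent a z))
      (fun z => (z - μ) ^ (n + 1) • resolvent a z - (z - μ) ^ n • (1 : A)) (sphere μ ρ) :=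
    fun z hz => by
      simp only [mul_smul_comm, sub_smul_one_mul_resolvent (hs hz), smul_sub, pow_succ, mul_smul]
  have hpow : (∮ z in C(μ, ρ), (z - μ) ^ n) = 0 := by
    simpa using circleIntegral.integral_sub_zpow_of_ne (n := (n : ℤ)) (by omega) μ μ ρ
  rw [rieszMoment, mul_smul_comm, hcomm, circleIntegral.integral_congr hρ hmul,
    circleIntegral.integral_sub (circleIntegrable_sub_pow_smul_resolvent (n + 1) hρ hs)
      (ContinuousOn.circleIntegrable hρ (by fun_prop)),
    circleIntegral.integral_smul_const, hpow, zero_smul, sub_zero, rieszMoment]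

lemma pow_sub_smul_one_mul_rieszMoment_zero (n : ℕ) (hρ : 0 ≤ ρ)
    (hs : sphere μ ρ ⊆ resolventSet ℂ a) :
    (a - μ • 1) ^ n * rieszMoment a μ ρ 0 = rieszMoment a μ ρ n := by
  induction n with
  | zero => rw [pow_zero, one_mul]
  | succ n ih => rw [pow_succ', mul_assoc, ih, sub_smul_one_mul_rieszMoment n hρ hs]

lemma rieszMoment_eq_of_le (hsep : closedBall μ r ∩ spectrum ℂ a ⊆ {μ}) (hρ : 0 < ρ)
    (hρr : ρ ≤ r) (n : ℕ) : rieszMoment a μ r n = rieszMoment a μ ρ n := by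
  have hannulus : closedBall μ r \ ball μ ρ ⊆ resolventSet ℂ a := fun z ⟨hz, hzρ⟩ =>
    mem_resolventSet_of_mem_closedBall hsep hz (by rintro rfl; exact hzρ (mem_ball_self hρ))
  refine congrArg _ <| Complex.circleIntegral_eq_of_differentiable_on_annulus_off_countable
    hρ hρr Set.countable_empty
    (((continuous_id.sub continuous_const).pow n).continuousOn.smul
      (continuousOn_resolvent hannulus))
    fun z ⟨⟨hz, hzρ⟩, _⟩ => ((differentiableAt_id.sub_const μ).pow n).smul
      (spectrum.hasDerivAt_resolvent_const_left (hannulus ⟨ball_subset_closedBall hz,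
        fun h => hzρ (ball_subset_closedBall h)⟩)).differentiableAt

lemma eventually_norm_pow_sub_smul_one_mul_rieszMoment_le
    (hsep : closedBall μ r ∩ spectrum ℂ a ⊆ {μ}) (hr : 0 < r) :
    ∀ᶠ ρ in 𝓝[>] 0, ∃ D, ∀ n, ‖(a - μ • 1) ^ n * rieszMoment a μ r 0‖ ≤ D * ρ ^ n := by
  filter_upwards [Ioc_mem_nhdsGT hr] with ρ ⟨hρ, hρr⟩
  have hs := sphere_subset_resolventSet hsep hρ hρr
  obtain ⟨C, hC⟩ := (isCompact_sphere μ ρ).exists_bound_of_continuousOn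
    (continuousOn_resolvent hs)
  refine ⟨ρ * C, fun n => ?_⟩
  rw [rieszMoment_eq_of_le hsep hρ hρr, pow_sub_smul_one_mul_rieszMoment_zero n hρ.le hs]
  linarith [norm_rieszMoment_le n hρ.le hC (a := a)]

end BanachAlgebra

section Operator

variable {H : Type*} [NormedAddCommGroup H] [NormedSpace ℂ H] {T : H →L[ℂ] H} {μ : ℂ} {r : ℝ}

lemma resolvent_apply_of_apply_eq_smul {y : H} (hy : T y = μ • y) {z : ℂ}
    (hz : z ∈ resolventSet ℂ T) (hzμ : z ≠ μ) : resolvent T z y = (z - μ)⁻¹ • y := by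
  have hshift : (algebraMap ℂ (H →L[ℂ] H) z - T) y = (z - μ) • y := by
    simp [Algebra.algebraMap_eq_smul_one, hy, sub_smul]
  calc resolvent T z y = (z - μ)⁻¹ • resolvent T z ((z - μ) • y) := by
        rw [map_smul, inv_smul_smul₀ (sub_ne_zero.mpr hzμ)]
    _ = (z - μ)⁻¹ • (resolvent T z * (algebraMap ℂ (H →L[ℂ] H) z - T)) y := by
        rw [mul_apply_eq_comp, hshift]
    _ = (z - μ)⁻¹ • y := by
        rw [resolvent, Ring.inverse_mul_cancel _ hz, one_apply_eq_self]

variable [CompleteSpace H]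

lemma IsParanormal.sub_smul_one_mul_rieszMoment_zero_eq_zero (hS : IsParanormal (T - μ • 1))
    (hsep : closedBall μ r ∩ spectrum ℂ T ⊆ {μ}) (hr : 0 < r) :
    (T - μ • 1) * rieszMoment T μ r 0 = 0 := by
  ext x
  refine hS.apply_eq_zero_of_eventually_norm_pow_apply_le ?_
  filter_upwards [eventually_norm_pow_sub_smul_one_mul_rieszMoment_le hsep hr] with ρ ⟨D, hD⟩
  refine ⟨D * ‖x‖, fun n => ?_⟩
  calc ‖((T - μ • 1) ^ n) (rieszMoment T μ r 0 x)‖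
      = ‖((T - μ • 1) ^ n * rieszMoment T μ r 0) x‖ := rfl
    _ ≤ ‖(T - μ • 1) ^ n * rieszMoment T μ r 0‖ * ‖x‖ := ContinuousLinearMap.le_opNorm _ _
    _ ≤ D * ρ ^ n * ‖x‖ := mul_le_mul_of_nonneg_right (hD n) (norm_nonneg x)
    _ = D * ‖x‖ * ρ ^ n := by ring

lemma rieszMoment_zero_apply_of_apply_eq_smul {y : H} (hy : T y = μ • y) (hr : 0 < r)
    (hs : sphere μ r ⊆ resolventSet ℂ T) : rieszMoment T μ r 0 y = y := by
  have hcomm : (∮ z in C(μ, r), (z - μ) ^ 0 • resolvent T z) y =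
      ∮ z in C(μ, r), ((z - μ) ^ 0 • resolvent T z) y :=
    ((ContinuousLinearMap.apply ℂ H y).circleIntegral_comp_comm
      (circleIntegrable_sub_pow_smul_resolvent 0 hr.le hs)).symm
  have heq : Set.EqOn (fun z => ((z - μ) ^ 0 • resolvent T z) y) (fun z => (z - μ)⁻¹ • y)
      (sphere μ r) := fun z hz => by
    simp only [pow_zero, one_smul]
    exact resolvent_apply_of_apply_eq_smul hy (hs hz) (ne_of_mem_sphere hz hr.ne')
  rw [rieszMoment, smul_apply, hcomm, circleIntegral.integral_congr hr.le heq,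
    circleIntegral.integral_smul_const, circleIntegral.integral_sub_inv_of_mem_ball
      (mem_ball_self hr), smul_smul, inv_mul_cancel₀ two_pi_I_ne_zero, one_smul]

end Operator

theorem stmt_10_general {H : Type*} [NormedAddCommGroup H] [InnerProductSpace ℂ H]
    [CompleteSpace H] (T : H →L[ℂ] H)
    (hT : ∀ (lam : ℂ) (x : H),
      ‖(T - lam • 1) x‖ ^ 2 ≤ ‖((T - lam • 1) ∘L (T - lam • 1)) x‖ * ‖x‖)
    (μ : ℂ)
    (r : ℝ) (hr : 0 < r)
    (hsep : Metric.closedBall μ r ∩ spectrum ℂ T = {μ})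
    (E : H →L[ℂ] H)
    (hE : E = ((2 * Real.pi * Complex.I)⁻¹ : ℂ) •
      (∮ z in C(μ, r), Ring.inverse (z • (1 : H →L[ℂ] H) - T))) :
    LinearMap.range (E : H →ₗ[ℂ] H) = LinearMap.ker ((T - μ • 1 : H →L[ℂ] H) : H →ₗ[ℂ] H) := by
  obtain rfl : E = rieszMoment T μ r 0 := by
    simp only [hE, rieszMoment, pow_zero, one_smul, resolvent, Algebra.algebraMap_eq_smul_one]
  apply le_antisymm
  · rintro _ ⟨x, rfl⟩
    change ((T - μ • 1) * rieszMoment T μ r 0) x = 0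
    rw [IsParanormal.sub_smul_one_mul_rieszMoment_zero_eq_zero (hT μ) hsep.subset hr,
      zero_apply]
  · intro y hy
    refine ⟨y, rieszMoment_zero_apply_of_apply_eq_smul ?_ hr
      (sphere_subset_resolventSet hsep.subset hr le_rfl)⟩
    simpa [sub_eq_zero] using hy

theorem stmt_10 {H : Type*} [NormedAddCommGroup H] [InnerProductSpace ℂ H]
    [CompleteSpace H] (T : H →L[ℂ] H)
    (hT : ∀ (lam : ℂ) (x : H),
      ‖(T - lam • 1) x‖ ^ 2 ≤ ‖((T - lam • 1) ∘L (T - lam • 1)) x‖ * ‖x‖)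
    (μ : ℂ) (hμ : μ ∈ spectrum ℂ T)
    (r : ℝ) (hr : 0 < r)
    (hsep : Metric.closedBall μ r ∩ spectrum ℂ T = {μ})
    (E : H →L[ℂ] H)
    (hE : E = ((2 * Real.pi * Complex.I)⁻¹ : ℂ) •
      (∮ z in C(μ, r), Ring.inverse (z • (1 : H →L[ℂ] H) - T))) :
    LinearMap.range (E : H →ₗ[ℂ] H) = LinearMap.ker ((T - μ • 1 : H →L[ℂ] H) : H →ₗ[ℂ] H) :=
  stmt_10_general T hT μ r hr hsep E hE
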